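/- arXiv:2407.02035 — 6 statements merged into one kernel-verified Lean document; each statement's English description precedes it below -/
import Mathlib

section
/- Let β > 0 and define φ_β : ℝ → ℝ by φ_β(s) = (s⁴ + β⁴)^{1/4} − β for s > 0 and φ_β(s) = 0 for s ≤ 0. Then φ_β is three times continuously differentiable on all of ℝ, and moreover φ_β(s) > 0, φ_β'(s) > 0, and φ_β''(s) > 0 for every s > 0. -/
/-!
On `(0, ∞)`, `φ_β` agrees with `s ↦ (s⁴ + β⁴)^(1/4) − β`, whose first two derivatives are
`s³ (s⁴ + β⁴)^(-3/4)` and `3 s² β⁴ (s⁴ + β⁴)^(-7/4)`, both positive there.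
For global regularity write `φ_β = g ∘ (max · 0)⁴` with `g y = (y + β⁴)^(1/4) − β`: since
`β⁴ > 0`, `g` is smooth on a neighbourhood of `[0, ∞)` and `g 0 = 0`, while `(max · 0)^(n+1)` is
`Cⁿ` because its derivative is `(n + 1) (max · 0)^n`.
-/

/-- The regularized positive part `φ_β`: `φ_β(s) = (s⁴ + β⁴)^(1/4) − β` for `s > 0`
and `φ_β(s) = 0` for `s ≤ 0`. -/
noncomputable def phiB (β : ℝ) (s : ℝ) : ℝ :=
  if 0 < s then (s ^ 4 + β ^ 4) ^ ((1 : ℝ) / 4) - β else 0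

open Filter Set Topology

theorem hasDerivAt_max_zero_pow (n : ℕ) (x : ℝ) :
    HasDerivAt (fun y : ℝ => max y 0 ^ (n + 2)) ((n + 2) * max x 0 ^ (n + 1)) x := by
  have hpos : ∀ y : ℝ, 0 ≤ y → max y 0 ^ (n + 2) = y ^ (n + 2) := fun y hy => by
    rw [max_eq_left hy]
  have hneg : ∀ y : ℝ, y ≤ 0 → max y 0 ^ (n + 2) = 0 := fun y hy => by
    rw [max_eq_right hy, zero_pow (by omega)]
  rcases lt_trichotomy x 0 with hx | rfl | hx
  · simpa [max_eq_right hx.le] using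
      (hasDerivAt_const x (0 : ℝ)).congr_of_eventuallyEq (eventually_of_mem (Iic_mem_nhds hx) hneg)
  · rw [← hasDerivWithinAt_univ, ← Iic_union_Ici]
    refine HasDerivWithinAt.union ?_ ?_
    · simpa using (hasDerivWithinAt_const (0 : ℝ) (Iic 0) (0 : ℝ)).congr hneg (hneg 0 le_rfl)
    · simpa using ((hasDerivAt_pow (n + 2) (0 : ℝ)).hasDerivWithinAt (s := Ici 0)).congr hpos
        (hpos 0 le_rfl)
  · simpa [max_eq_left hx.le] using
      (hasDerivAt_pow (n + 2) x).congr_of_eventuallyEq (eventually_of_mem (Ici_mem_nhds hx) hpos)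

theorem contDiff_max_zero_pow (n : ℕ) : ContDiff ℝ n fun x : ℝ => max x 0 ^ (n + 1) := by
  induction n with
  | zero => simpa [contDiff_zero] using continuous_id.max continuous_const
  | succ n ih =>
    have hd := hasDerivAt_max_zero_pow n
    rw [Nat.cast_succ, contDiff_succ_iff_deriv]
    refine ⟨fun x => (hd x).differentiableAt, by simp, ?_⟩
    rw [funext fun x => (hd x).deriv]
    exact contDiff_const.mul ih

theorem pow_four_rpow_quarter {x : ℝ} (hx : 0 ≤ x) : (x ^ 4) ^ ((1 : ℝ) / 4) = x := by
  simpa using Real.pow_rpow_inv_natCast hx (n := 4) four_ne_zero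

section phiB

variable {β s : ℝ}

theorem phiB_eq_comp (hβ : 0 ≤ β) :
    phiB β = (fun y : ℝ => (y + β ^ 4) ^ ((1 : ℝ) / 4) - β) ∘ fun x : ℝ => max x 0 ^ 4 := by
  funext x
  by_cases hx : 0 < x
  · simp [phiB, hx, max_eq_left hx.le]
  · simp only [phiB, hx, if_false, Function.comp_apply, max_eq_right (not_lt.mp hx)]
    rw [zero_pow four_ne_zero, zero_add, pow_four_rpow_quarter hβ, sub_self]

theorem contDiff_phiB (hβ : 0 < β) : ContDiff ℝ 3 (phiB β) := by
  rw [phiB_eq_comp hβ.le]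
  refine contDiff_iff_contDiffAt.mpr fun x => ContDiffAt.comp x ?_
    (contDiff_max_zero_pow 3).contDiffAt
  have hbase : max x 0 ^ 4 + β ^ 4 ≠ 0 := by positivity
  exact ((contDiffAt_id.add contDiffAt_const).rpow_const_of_ne hbase).sub contDiffAt_const

theorem phiB_pos (hs : 0 < s) : 0 < phiB β s := by
  have hroot : β < (s ^ 4 + β ^ 4) ^ ((1 : ℝ) / 4) :=
    calc β ≤ |β| := le_abs_self β
      _ = (|β| ^ 4) ^ ((1 : ℝ) / 4) := (pow_four_rpow_quarter (abs_nonneg β)).symm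
      _ < (s ^ 4 + β ^ 4) ^ ((1 : ℝ) / 4) := by
        rw [(by decide : Even 4).pow_abs]
        exact Real.rpow_lt_rpow (by positivity) (by linarith [pow_pos hs 4]) (by norm_num)
  simpa [phiB, hs] using hroot

theorem phiB_eventuallyEq_of_pos (hs : 0 < s) :
    phiB β =ᶠ[𝓝 s] fun y => (y ^ 4 + β ^ 4) ^ ((1 : ℝ) / 4) - β :=
  eventually_of_mem (Ioi_mem_nhds hs) fun _ hy => if_pos hy

theorem hasDerivAt_pow_four_add_rpow {p : ℝ} (h : s ^ 4 + β ^ 4 ≠ 0) :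
    HasDerivAt (fun y => (y ^ 4 + β ^ 4) ^ p)
      (4 * s ^ 3 * p * (s ^ 4 + β ^ 4) ^ (p - 1)) s := by
  simpa using ((hasDerivAt_pow 4 s).add_const (β ^ 4)).rpow_const (p := p) (Or.inl h)

theorem deriv_phiB (hs : 0 < s) : deriv (phiB β) s = s ^ 3 * (s ^ 4 + β ^ 4) ^ (-3 / 4 : ℝ) := by
  have h : s ^ 4 + β ^ 4 ≠ 0 := by positivity
  rw [(phiB_eventuallyEq_of_pos hs).deriv_eq, ((hasDerivAt_pow_four_add_rpow h).sub_const β).deriv,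
    show (1 : ℝ) / 4 - 1 = -3 / 4 by norm_num]
  ring

theorem deriv_deriv_phiB (hs : 0 < s) :
    deriv (deriv (phiB β)) s = 3 * s ^ 2 * β ^ 4 * (s ^ 4 + β ^ 4) ^ (-7 / 4 : ℝ) := by
  have hX : 0 < s ^ 4 + β ^ 4 := by positivity
  have hderiv : deriv (phiB β) =ᶠ[𝓝 s] fun y => y ^ 3 * (y ^ 4 + β ^ 4) ^ (-3 / 4 : ℝ) :=
    eventually_of_mem (Ioi_mem_nhds hs) fun _ hy => deriv_phiB hy
  have hprod := (hasDerivAt_pow 3 s).fun_mul (hasDerivAt_pow_four_add_rpow hX.ne' (p := -3 / 4))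
  rw [hderiv.deriv_eq, hprod.deriv]
  have hsplit :
      (s ^ 4 + β ^ 4) ^ (-3 / 4 : ℝ) = (s ^ 4 + β ^ 4) * (s ^ 4 + β ^ 4) ^ (-7 / 4 : ℝ) := by
    rw [← Real.rpow_one_add' hX.le (by norm_num)]; norm_num
  rw [show (-3 / 4 : ℝ) - 1 = -7 / 4 by norm_num, hsplit]
  push_cast
  ring

end phiB

/-- For `β > 0`, the regularized positive part `φ_β` is three times continuously
differentiable on all of `ℝ`, and `φ_β(s) > 0`, `φ_β'(s) > 0`, `φ_β''(s) > 0` for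
every `s > 0`. -/
theorem phiB_contDiff_three_and_derivs_pos (β : ℝ) (hβ : 0 < β) :
    ContDiff ℝ 3 (phiB β) ∧
      ∀ s : ℝ, 0 < s →
        0 < phiB β s ∧ 0 < deriv (phiB β) s ∧ 0 < deriv (deriv (phiB β)) s := by
  refine ⟨contDiff_phiB hβ, fun s hs => ⟨phiB_pos hs, ?_, ?_⟩⟩
  · rw [deriv_phiB hs]
    positivity
  · rw [deriv_deriv_phiB hs]
    positivity
end

section
/- Let φ_β be the regularized positive part. Then for every β > 0 and every s ∈ ℝ one has the two-sided estimate φ_β(s) ≤ s · φ_β'(s) ≤ 4 · φ_β(s). -/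
open Filter Topology

lemma Real.rpow_one_div_four_pow_four {x : ℝ} (hx : 0 ≤ x) : (x ^ ((1 : ℝ) / 4)) ^ 4 = x := by
  rw [one_div]; exact_mod_cast Real.rpow_inv_natCast_pow hx four_ne_zero

lemma sub_mul_pow_three_le_pow_four_sub {a b : ℝ} (hb : 0 ≤ b) (hba : b ≤ a) :
    (a - b) * a ^ 3 ≤ a ^ 4 - b ^ 4 := by
  have : b ^ 3 ≤ a ^ 3 := pow_le_pow_left₀ hb hba 3
  nlinarith

lemma pow_four_sub_le_four_mul_sub_mul_pow_three (a b : ℝ) :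
    a ^ 4 - b ^ 4 ≤ 4 * (a - b) * a ^ 3 := by
  have h : 4 * (a - b) * a ^ 3 - (a ^ 4 - b ^ 4) = (a - b) ^ 2 * (2 * a ^ 2 + (a + b) ^ 2) := by
    ring
  have : 0 ≤ (a - b) ^ 2 * (2 * a ^ 2 + (a + b) ^ 2) := by positivity
  linarith

namespace phiB

variable {β s : ℝ}

lemma of_nonpos (hs : s ≤ 0) : phiB β s = 0 := if_neg hs.not_gt

lemma of_pos (hs : 0 < s) : phiB β s = (s ^ 4 + β ^ 4) ^ ((1 : ℝ) / 4) - β := if_pos hs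

lemma deriv_of_neg (hs : s < 0) : deriv (phiB β) s = 0 := by
  have h : phiB β =ᶠ[𝓝 s] fun _ => 0 := by
    filter_upwards [eventually_lt_nhds hs] with x hx using of_nonpos hx.le
  rw [h.deriv_eq, deriv_const]

lemma hasDerivAt_of_pos (hs : 0 < s) :
    HasDerivAt (phiB β) (s ^ 3 / ((s ^ 4 + β ^ 4) ^ ((1 : ℝ) / 4)) ^ 3) s := by
  set u := s ^ 4 + β ^ 4
  have hu : 0 < u := by positivity
  have h := (((hasDerivAt_pow 4 s).add_const (β ^ 4)).rpow_const
    (p := (1 : ℝ) / 4) (Or.inl hu.ne')).sub_const β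
  have h_eq : phiB β =ᶠ[𝓝 s] fun x => (x ^ 4 + β ^ 4) ^ ((1 : ℝ) / 4) - β := by
    filter_upwards [eventually_gt_nhds hs] with x hx using of_pos hx
  refine (h.congr_of_eventuallyEq h_eq).congr_deriv ?_
  rw [Real.rpow_sub_one hu.ne']
  nth_rewrite 2 [← Real.rpow_one_div_four_pow_four hu.le]
  field_simp
  norm_num

end phiB

/-- For every `β > 0` and every `s ∈ ℝ`, `φ_β(s) ≤ s · φ_β'(s) ≤ 4 · φ_β(s)`. -/
theorem phiB_le_mul_deriv_le (β : ℝ) (hβ : 0 < β) (s : ℝ) :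
    phiB β s ≤ s * deriv (phiB β) s ∧ s * deriv (phiB β) s ≤ 4 * phiB β s := by
  rcases lt_trichotomy s 0 with hs | rfl | hs
  · simp [phiB.of_nonpos hs.le, phiB.deriv_of_neg hs]
  · simp [phiB.of_nonpos le_rfl]
  set A := (s ^ 4 + β ^ 4) ^ ((1 : ℝ) / 4)
  have hA4 : A ^ 4 = s ^ 4 + β ^ 4 := Real.rpow_one_div_four_pow_four (by positivity)
  have hA : 0 < A := Real.rpow_pos_of_pos (by positivity) _
  have hβA : β ≤ A :=
    (pow_le_pow_iff_left₀ hβ.le hA.le four_ne_zero).1 (by rw [hA4]; linarith [pow_pos hs 4])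
  have h_mul_deriv : s * deriv (phiB β) s = (A ^ 4 - β ^ 4) / A ^ 3 := by
    rw [(phiB.hasDerivAt_of_pos hs).deriv, hA4]
    ring
  rw [h_mul_deriv, phiB.of_pos hs, le_div_iff₀ (by positivity), div_le_iff₀ (by positivity)]
  exact ⟨sub_mul_pow_three_le_pow_four_sub hβ.le hβA,
    pow_four_sub_le_four_mul_sub_mul_pow_three A β⟩
end

section
/- Let φ_β be the regularized positive part. Then for every β > 0 and every s ∈ ℝ one has s · φ_β''(s) ≤ 3 · φ_β'(s). -/
open Real Filter Asymptotics

private lemma g_hasDeriv (β : ℝ) (hβ : 0 < β) (s : ℝ) :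
    HasDerivAt (fun t : ℝ => (t ^ 4 + β ^ 4) ^ ((1 : ℝ) / 4) - β)
      (s ^ 3 * (s ^ 4 + β ^ 4) ^ (-(3 : ℝ) / 4)) s := by
  have hupos : (0:ℝ) < s ^ 4 + β ^ 4 := by positivity
  have hu : HasDerivAt (fun t : ℝ => t ^ 4 + β ^ 4) (4 * s ^ 3) s := by
    simpa using ((hasDerivAt_pow 4 s).add_const (β ^ 4))
  have h := (hu.rpow_const (p := (1 : ℝ) / 4) (Or.inl (ne_of_gt hupos))).sub_const β
  have hex : (1:ℝ)/4 - 1 = -(3:ℝ)/4 := by norm_num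
  have he : 4 * s ^ 3 * ((1:ℝ)/4) * (s ^ 4 + β ^ 4) ^ ((1:ℝ)/4 - 1)
      = s ^ 3 * (s ^ 4 + β ^ 4) ^ (-(3 : ℝ) / 4) := by
    rw [hex]; ring
  rwa [he] at h

private lemma g'_hasDeriv (β : ℝ) (hβ : 0 < β) (s : ℝ) :
    HasDerivAt (fun t : ℝ => t ^ 3 * (t ^ 4 + β ^ 4) ^ (-(3 : ℝ) / 4))
      (3 * s ^ 2 * (s ^ 4 + β ^ 4) ^ (-(3 : ℝ) / 4)
        + s ^ 3 * (4 * s ^ 3 * (-(3:ℝ)/4) * (s ^ 4 + β ^ 4) ^ (-(3 : ℝ) / 4 - 1))) s := by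
  have hupos : (0:ℝ) < s ^ 4 + β ^ 4 := by positivity
  have hu : HasDerivAt (fun t : ℝ => t ^ 4 + β ^ 4) (4 * s ^ 3) s := by
    simpa using ((hasDerivAt_pow 4 s).add_const (β ^ 4))
  have h3 : HasDerivAt (fun t : ℝ => t ^ 3) (3 * s ^ 2) s := by
    simpa using hasDerivAt_pow 3 s
  have hr := hu.rpow_const (p := -(3:ℝ)/4) (Or.inl (ne_of_gt hupos))
  exact h3.mul hr

/-- For every `β > 0` and every `s ∈ ℝ`, `s · φ_β''(s) ≤ 3 · φ_β'(s)`. -/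
theorem phiB_mul_deriv2_le (β : ℝ) (hβ : 0 < β) (s : ℝ) :
    s * deriv (deriv (phiB β)) s ≤ 3 * deriv (phiB β) s := by
  rcases lt_trichotomy s 0 with hs | hs | hs
  · -- phiB vanishes near s
    have hmem : Set.Iio (0:ℝ) ∈ nhds s := isOpen_Iio.mem_nhds hs
    have hzero : ∀ t ∈ Set.Iio (0:ℝ), phiB β t = 0 := by
      intro t ht
      have : ¬ 0 < t := not_lt.mpr (Set.mem_Iio.mp ht).le
      simp [phiB, this]
    have hd1 : ∀ t ∈ Set.Iio (0:ℝ), deriv (phiB β) t = 0 := by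
      intro t ht
      have hmt : Set.Iio (0:ℝ) ∈ nhds t := isOpen_Iio.mem_nhds ht
      have : phiB β =ᶠ[nhds t] (fun _ => (0:ℝ)) :=
        Filter.eventually_of_mem hmt hzero
      rw [this.deriv_eq]; simp
    have h1 : deriv (phiB β) s = 0 := hd1 s hs
    have h2 : deriv (deriv (phiB β)) s = 0 := by
      have : deriv (phiB β) =ᶠ[nhds s] (fun _ => (0:ℝ)) :=
        Filter.eventually_of_mem hmem hd1
      rw [this.deriv_eq]; simp
    rw [h1, h2]; simp
  · -- s = 0
    subst hs
    have hg0 : HasDerivAt (fun t : ℝ => (t ^ 4 + β ^ 4) ^ ((1 : ℝ) / 4) - β) 0 0 := by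
      simpa using g_hasDeriv β hβ 0
    have hgz : ((0:ℝ) ^ 4 + β ^ 4) ^ ((1 : ℝ) / 4) - β = 0 := by
      have : ((0:ℝ) ^ 4 + β ^ 4) = β ^ (4:ℝ) := by
        rw [← Real.rpow_natCast β 4]; norm_num
      rw [this, ← Real.rpow_mul hβ.le]
      norm_num
    -- phiB is differentiable at 0 with derivative 0
    have hβ4 : ((β:ℝ) ^ 4) ^ ((4:ℝ)⁻¹) = β := by
      rw [← Real.rpow_natCast β 4, ← Real.rpow_mul hβ.le]
      norm_num
    have hglo : (fun t : ℝ => (t ^ 4 + β ^ 4) ^ ((1 : ℝ) / 4) - β) =o[nhds 0]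
        (fun t : ℝ => t) := by
      have := (hasDerivAt_iff_isLittleO.mp hg0)
      simpa [hβ4] using this
    have hbig : (phiB β) =O[nhds 0] (fun t : ℝ => (t ^ 4 + β ^ 4) ^ ((1 : ℝ) / 4) - β) := by
      apply Asymptotics.IsBigO.of_bound 1
      filter_upwards with t
      by_cases ht : 0 < t
      · simp [phiB, ht]
      · simp [phiB, ht]
    have hlo : (phiB β) =o[nhds 0] (fun t : ℝ => t) := hbig.trans_isLittleO hglo
    have hphiB0 : phiB β 0 = 0 := by simp [phiB]
    have hderiv0 : HasDerivAt (phiB β) 0 0 := by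
      rw [hasDerivAt_iff_isLittleO]
      simpa [hphiB0] using hlo
    rw [hderiv0.deriv]
    simp
  · -- s > 0
    have hupos : (0:ℝ) < s ^ 4 + β ^ 4 := by positivity
    have hmem : Set.Ioi (0:ℝ) ∈ nhds s := isOpen_Ioi.mem_nhds hs
    have heq : ∀ t ∈ Set.Ioi (0:ℝ),
        phiB β t = (t ^ 4 + β ^ 4) ^ ((1 : ℝ) / 4) - β := by
      intro t ht; simp [phiB, Set.mem_Ioi.mp ht]
    have hd1 : ∀ t ∈ Set.Ioi (0:ℝ),
        deriv (phiB β) t = t ^ 3 * (t ^ 4 + β ^ 4) ^ (-(3 : ℝ) / 4) := by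
      intro t ht
      have hmt : Set.Ioi (0:ℝ) ∈ nhds t := isOpen_Ioi.mem_nhds ht
      have hev : phiB β =ᶠ[nhds t] (fun t => (t ^ 4 + β ^ 4) ^ ((1 : ℝ) / 4) - β) :=
        Filter.eventually_of_mem hmt heq
      rw [hev.deriv_eq, (g_hasDeriv β hβ t).deriv]
    have h1 : deriv (phiB β) s = s ^ 3 * (s ^ 4 + β ^ 4) ^ (-(3 : ℝ) / 4) := hd1 s hs
    have h2 : deriv (deriv (phiB β)) s
        = 3 * s ^ 2 * (s ^ 4 + β ^ 4) ^ (-(3 : ℝ) / 4)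
          + s ^ 3 * (4 * s ^ 3 * (-(3:ℝ)/4) * (s ^ 4 + β ^ 4) ^ (-(3 : ℝ) / 4 - 1)) := by
      have hev : deriv (phiB β) =ᶠ[nhds s]
          (fun t => t ^ 3 * (t ^ 4 + β ^ 4) ^ (-(3 : ℝ) / 4)) :=
        Filter.eventually_of_mem hmem hd1
      rw [hev.deriv_eq, (g'_hasDeriv β hβ s).deriv]
    rw [h1, h2]
    have hb : (0:ℝ) < (s ^ 4 + β ^ 4) ^ (-(3 : ℝ) / 4 - 1) := Real.rpow_pos_of_pos hupos _
    nlinarith [pow_pos hs 7, mul_pos (pow_pos hs 7) hb]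
end

section
/- Let d ≥ 1 and let W : ℝ^{d×d} → ℝ be differentiable on the open set GL⁺(d) and frame indifferent, i.e. W(QF) = W(F) for all Q ∈ SO(d) and all F ∈ GL⁺(d). Fix F ∈ GL⁺(d) and let S ∈ ℝ^{d×d} be the matrix representing the Fréchet derivative of W at F, i.e. the derivative of W at F applied to G ∈ ℝ^{d×d} equals S : G. Then the matrix F⁻¹S is symmetric; equivalently, S Fᵀ = F Sᵀ. -/
/-!
For skew-symmetric `A`, the curve `t ↦ exp (t A) F` stays in the `SO(d)`-orbit of `F`, so `W` is
constant along it; differentiating at `t = 0` gives `S : A F = tr (F Sᵀ A) = 0`. A matrix whose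
trace pairing with every skew-symmetric matrix vanishes is symmetric, so `F Sᵀ = (F Sᵀ)ᵀ = S Fᵀ`.
-/

open Matrix

theorem HasFDerivAt.apply_eq_zero_of_comp_eq_const {𝕜 E F : Type*} [NontriviallyNormedField 𝕜]
    [NormedAddCommGroup E] [NormedSpace 𝕜 E] [NormedAddCommGroup F] [NormedSpace 𝕜 F]
    {f : E → F} {L : E →L[𝕜] F} {x v : E} {γ : 𝕜 → E} {t₀ : 𝕜}
    (hf : HasFDerivAt f L x) (hγ : HasDerivAt γ v t₀) (hγ₀ : γ t₀ = x)
    (hconst : ∀ t, f (γ t) = f x) : L v = 0 := by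
  have hcomp : HasDerivAt (f ∘ γ) (L v) t₀ := (hγ₀ ▸ hf).comp_hasDerivAt t₀ hγ
  rw [show f ∘ γ = fun _ => f x from funext hconst] at hcomp
  exact hcomp.unique (hasDerivAt_const t₀ _)

namespace Matrix

variable {n : Type*} [Fintype n] [DecidableEq n]

theorem transpose_eq_self_of_trace_mul_skew_eq_zero {R : Type*} [Ring R] {M : Matrix n n R}
    (h : ∀ A : Matrix n n R, Aᵀ = -A → trace (M * A) = 0) : Mᵀ = M := by
  ext i j
  have hskew : (single i j (1 : R) - single j i 1)ᵀ = -(single i j 1 - single j i 1) := by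
    rw [transpose_sub, transpose_single, transpose_single, neg_sub]
  simpa [mul_sub, trace_sub, trace_mul_single, sub_eq_zero] using h _ hskew

theorem det_exp_pos (A : Matrix n n ℝ) : 0 < (NormedSpace.exp A).det := by
  have hsq : NormedSpace.exp A = NormedSpace.exp ((2⁻¹ : ℝ) • A) ^ 2 := by
    rw [sq, ← exp_add_of_commute _ _ (Commute.refl _), ← add_smul]; norm_num
  rw [hsq, det_pow]
  exact pow_two_pos_of_ne_zero ((isUnit_iff_isUnit_det _).mp (isUnit_exp ((2⁻¹ : ℝ) • A))).ne_zero

theorem transpose_exp_mul_exp_of_skew {A : Matrix n n ℝ} (hA : Aᵀ = -A) :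
    (NormedSpace.exp A)ᵀ * NormedSpace.exp A = 1 := by
  rw [← exp_transpose, hA, exp_neg]
  exact nonsing_inv_mul _ ((isUnit_iff_isUnit_det _).mp (isUnit_exp A))

theorem det_exp_eq_one_of_skew {A : Matrix n n ℝ} (hA : Aᵀ = -A) :
    (NormedSpace.exp A).det = 1 := by
  have h := congrArg det (transpose_exp_mul_exp_of_skew hA)
  rw [det_mul, det_transpose, det_one] at h
  nlinarith [det_exp_pos A]

end Matrix

theorem HasFDerivAt.apply_skew_mul_eq_zero_of_rotation_invariant {n E : Type*} [Fintype n]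
    [DecidableEq n] [NormedAddCommGroup E] [NormedSpace ℝ E] {W : Matrix n n ℝ → E}
    (hW : ∀ Q F : Matrix n n ℝ, Qᵀ * Q = 1 → Q.det = 1 → 0 < F.det → W (Q * F) = W F)
    {F : Matrix n n ℝ} (hF : 0 < F.det) {L : Matrix n n ℝ →L[ℝ] E} (hL : HasFDerivAt W L F)
    {A : Matrix n n ℝ} (hA : Aᵀ = -A) : L (A * F) = 0 := by
  -- The derivative of the matrix exponential needs a normed algebra structure; the Frobenius one
  -- induces the usual topology on matrices.
  let : NormedRing (Matrix n n ℝ) := frobeniusNormedRing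
  let : NormedAlgebra ℝ (Matrix n n ℝ) := frobeniusNormedAlgebra
  have htA : ∀ t : ℝ, (t • A)ᵀ = -(t • A) := fun t => by rw [transpose_smul, hA, smul_neg]
  have hγ : HasDerivAt (fun t : ℝ => NormedSpace.exp (t • A) * F) (A * F) 0 := by
    have h := (hasDerivAt_exp_smul_const (𝕂 := ℝ) A 0).mul_const F
    simp only [zero_smul, NormedSpace.exp_zero, one_mul] at h
    exact h
  refine hL.apply_eq_zero_of_comp_eq_const hγ (by simp) fun t => ?_
  exact hW _ _ (transpose_exp_mul_exp_of_skew (htA t)) (det_exp_eq_one_of_skew (htA t)) hF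

theorem frame_indifference_stress_symmetric_general {d : ℕ}
    (W : Matrix (Fin d) (Fin d) ℝ → ℝ)
    (hWframe : ∀ Q F : Matrix (Fin d) (Fin d) ℝ,
      Qᵀ * Q = 1 → Q.det = 1 → 0 < F.det → W (Q * F) = W F)
    (F S : Matrix (Fin d) (Fin d) ℝ) (hF : 0 < F.det)
    (L : Matrix (Fin d) (Fin d) ℝ →L[ℝ] ℝ)
    (hL : HasFDerivAt W L F)
    (hLS : ∀ G : Matrix (Fin d) (Fin d) ℝ, L G = Matrix.trace (Sᵀ * G)) :
    S * Fᵀ = F * Sᵀ := by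
  have hsymm : (F * Sᵀ)ᵀ = F * Sᵀ := transpose_eq_self_of_trace_mul_skew_eq_zero fun A hA => by
    rw [← trace_mul_cycle, mul_assoc, ← hLS]
    exact hL.apply_skew_mul_eq_zero_of_rotation_invariant hWframe hF hA
  rwa [transpose_mul, transpose_transpose] at hsymm

/-- If `W` is differentiable on `GL⁺(d)` and frame indifferent, and `S` represents
the Fréchet derivative of `W` at `F ∈ GL⁺(d)` with respect to the Frobenius inner
product `A : B = trace(Aᵀ B)`, then `F⁻¹ S` is symmetric, i.e. `S Fᵀ = F Sᵀ`. -/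
theorem frame_indifference_stress_symmetric {d : ℕ} (hd : 1 ≤ d)
    (W : Matrix (Fin d) (Fin d) ℝ → ℝ)
    (hWdiff : DifferentiableOn ℝ W {F : Matrix (Fin d) (Fin d) ℝ | 0 < F.det})
    (hWframe : ∀ Q F : Matrix (Fin d) (Fin d) ℝ,
      Qᵀ * Q = 1 → Q.det = 1 → 0 < F.det → W (Q * F) = W F)
    (F S : Matrix (Fin d) (Fin d) ℝ) (hF : 0 < F.det)
    (L : Matrix (Fin d) (Fin d) ℝ →L[ℝ] ℝ)
    (hL : HasFDerivAt W L F)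
    (hLS : ∀ G : Matrix (Fin d) (Fin d) ℝ, L G = Matrix.trace (Sᵀ * G)) :
    S * Fᵀ = F * Sᵀ :=
  frame_indifference_stress_symmetric_general W hWframe F S hF L hL hLS
end

section
/- Let E be a real normed vector space, M ≥ 0, θ_c > 0, and let g : (0, ∞) → E be twice differentiable with ‖g(θ)‖ ≤ M, ‖g'(θ)‖ ≤ M / max(θ, 1), and ‖g''(θ)‖ ≤ M for every θ > 0. Then for every θ > 0 one has the Taylor-type estimate ‖g(θ) − g(θ_c) − min(θ − θ_c, 1) · g'(θ_c)‖ ≤ 3 M · min((θ − θ_c)², 1). -/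
/-!
For `(θ - θc)² ≤ 1` the remainder is the usual second-order Taylor remainder, bounded by
`M (θ - θc)²` through the bound on `g''`. Otherwise each of the three terms is at most `M`;
for the linear term this is because `|min (θ - θc) 1| ≤ max θc 1` when `θ ≥ 0`, which is exactly
the weight in the bound on `g'`.
-/

open Set

/-- Two applications of the mean value inequality: first to `f'`, then to `t ↦ f t - t • f' x`. -/
theorem norm_sub_sub_smul_le_of_norm_deriv2_le {E : Type*} [NormedAddCommGroup E]
    [NormedSpace ℝ E] {f f' f'' : ℝ → E} {C x y : ℝ}
    (hf : ∀ t ∈ uIcc x y, HasDerivAt f (f' t) t)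
    (hf' : ∀ t ∈ uIcc x y, HasDerivAt f' (f'' t) t)
    (hf'' : ∀ t ∈ uIcc x y, ‖f'' t‖ ≤ C) :
    ‖f y - f x - (y - x) • f' x‖ ≤ C * (y - x) ^ 2 := by
  have hx : x ∈ uIcc x y := left_mem_uIcc
  have hy : y ∈ uIcc x y := right_mem_uIcc
  have hC : 0 ≤ C := (norm_nonneg _).trans (hf'' x hx)
  have hf'_lip : ∀ t ∈ uIcc x y, ‖f' t - f' x‖ ≤ C * |y - x| := fun t ht =>
    calc ‖f' t - f' x‖ ≤ C * ‖t - x‖ :=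
          convex_uIcc x y |>.norm_image_sub_le_of_norm_hasDerivWithin_le
            (fun s hs => (hf' s hs).hasDerivWithinAt) hf'' hx ht
      _ ≤ C * |y - x| := mul_le_mul_of_nonneg_left (abs_sub_left_of_mem_uIcc ht) hC
  have hderiv : ∀ t ∈ uIcc x y,
      HasDerivWithinAt (fun s => f s - s • f' x) (f' t - f' x) (uIcc x y) t := fun t ht => by
    have h := (hf t ht).sub ((hasDerivAt_id' t).smul_const (f' x))
    rw [one_smul] at h
    exact h.hasDerivWithinAt
  calc ‖f y - f x - (y - x) • f' x‖ = ‖(f y - y • f' x) - (f x - x • f' x)‖ := by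
        rw [sub_smul]; abel_nf
    _ ≤ C * |y - x| * ‖y - x‖ :=
        (convex_uIcc x y).norm_image_sub_le_of_norm_hasDerivWithin_le hderiv hf'_lip hx hy
    _ = C * (y - x) ^ 2 := by rw [Real.norm_eq_abs, mul_assoc, ← sq, sq_abs]

theorem abs_min_sub_one_le_max {θ θc : ℝ} (hθ : 0 ≤ θ) : |min (θ - θc) 1| ≤ max θc 1 := by
  rw [abs_le]
  constructor
  · exact le_min (by linarith [le_max_left θc 1]) (by linarith [le_max_right θc 1])
  · exact (min_le_right _ _).trans (le_max_right _ _)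

theorem taylor_remainder_bound_general {E : Type*} [NormedAddCommGroup E]
    [NormedSpace ℝ E] (M θc : ℝ) (hθc : 0 < θc)
    (g g' g'' : ℝ → E)
    (hg' : ∀ θ : ℝ, 0 < θ → HasDerivAt g (g' θ) θ)
    (hg'' : ∀ θ : ℝ, 0 < θ → HasDerivAt g' (g'' θ) θ)
    (hgbd : ∀ θ : ℝ, 0 < θ → ‖g θ‖ ≤ M)
    (hg'bd : ∀ θ : ℝ, 0 < θ → ‖g' θ‖ ≤ M / max θ 1)
    (hg''bd : ∀ θ : ℝ, 0 < θ → ‖g'' θ‖ ≤ M) :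
    ∀ θ : ℝ, 0 < θ →
      ‖g θ - g θc - min (θ - θc) 1 • g' θc‖ ≤ 3 * M * min ((θ - θc) ^ 2) 1 := by
  intro θ hθ
  have hM : 0 ≤ M := (norm_nonneg _).trans (hgbd θc hθc)
  rcases le_total ((θ - θc) ^ 2) 1 with hnear | hfar
  · have hpos : ∀ t ∈ uIcc θc θ, 0 < t := fun t ht => (lt_min hθc hθ).trans_le ht.1
    have hstep : θ - θc ≤ 1 := (le_abs_self _).trans ((sq_le_one_iff_abs_le_one _).mp hnear)
    rw [min_eq_left hstep, min_eq_left hnear]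
    calc ‖g θ - g θc - (θ - θc) • g' θc‖ ≤ M * (θ - θc) ^ 2 :=
          norm_sub_sub_smul_le_of_norm_deriv2_le (fun t ht => hg' t (hpos t ht))
            (fun t ht => hg'' t (hpos t ht)) (fun t ht => hg''bd t (hpos t ht))
      _ ≤ 3 * M * (θ - θc) ^ 2 := by nlinarith [sq_nonneg (θ - θc)]
  · have hmax : 0 < max θc 1 := lt_max_of_lt_right one_pos
    have hlin : ‖min (θ - θc) 1 • g' θc‖ ≤ M :=
      calc ‖min (θ - θc) 1 • g' θc‖ = |min (θ - θc) 1| * ‖g' θc‖ := by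
            rw [norm_smul, Real.norm_eq_abs]
        _ ≤ max θc 1 * (M / max θc 1) :=
            mul_le_mul (abs_min_sub_one_le_max hθ.le) (hg'bd θc hθc) (norm_nonneg _) hmax.le
        _ = M := mul_div_cancel₀ M hmax.ne'
    rw [min_eq_right hfar, mul_one]
    calc ‖g θ - g θc - min (θ - θc) 1 • g' θc‖
        ≤ ‖g θ‖ + ‖g θc‖ + ‖min (θ - θc) 1 • g' θc‖ :=
          (norm_sub_le _ _).trans (add_le_add_left (norm_sub_le _ _) _)
      _ ≤ 3 * M := by linarith [hgbd θ hθ, hgbd θc hθc]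

/-- One-variable Taylor-remainder estimate: if `g : (0,∞) → E` is twice
differentiable with `‖g(θ)‖ ≤ M`, `‖g'(θ)‖ ≤ M / max(θ,1)`, and `‖g''(θ)‖ ≤ M`,
then `‖g(θ) − g(θ_c) − min(θ − θ_c, 1) g'(θ_c)‖ ≤ 3 M min((θ − θ_c)², 1)` for all
`θ > 0`. -/
theorem taylor_remainder_bound {E : Type*} [NormedAddCommGroup E]
    [NormedSpace ℝ E] (M θc : ℝ) (hM : 0 ≤ M) (hθc : 0 < θc)
    (g g' g'' : ℝ → E)
    (hg' : ∀ θ : ℝ, 0 < θ → HasDerivAt g (g' θ) θ)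
    (hg'' : ∀ θ : ℝ, 0 < θ → HasDerivAt g' (g'' θ) θ)
    (hgbd : ∀ θ : ℝ, 0 < θ → ‖g θ‖ ≤ M)
    (hg'bd : ∀ θ : ℝ, 0 < θ → ‖g' θ‖ ≤ M / max θ 1)
    (hg''bd : ∀ θ : ℝ, 0 < θ → ‖g'' θ‖ ≤ M) :
    ∀ θ : ℝ, 0 < θ →
      ‖g θ - g θc - min (θ - θc) 1 • g' θc‖ ≤ 3 * M * min ((θ - θc) ^ 2) 1 :=
  taylor_remainder_bound_general M θc hθc g g' g'' hg' hg'' hgbd hg'bd hg''bd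
end

section
/- Let C₁, C₂, C₄ ≥ 0, θ_c > 0, and let c ∈ ℝ with |c| ≤ C₄. Let a : (0, ∞) → ℝ be three times differentiable with |a''(θ)| ≤ C₂ / max(θ, 1)² and |a'''(θ)| ≤ C₂ / max(θ, 1) for every θ > 0, and define w(θ) := a(θ) c + C₁ θ (1 − log θ) and w^{in}(θ) := w(θ) − θ w'(θ). Assume C₁ ≥ (1 + 4θ_c) C₂ C₄. Then for every θ > 0 one has |(w^{in})''(θ)| ≤ (−θ w''(θ)) / (2 θ_c). -/
/-!
Differentiating `w^{in} = w - θ w'` gives `(w^{in})' = -θ w'' = C₁ - θ a'' c`, so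
`(w^{in})'' = -(a'' + θ a''') c`. The weights `max θ 1` make `|a''|`, `θ |a''|` and `θ |a'''|` all
at most `C₂`, hence `|(w^{in})''| ≤ 2 C₂ C₄` while `-θ w'' ≥ C₁ - C₂ C₄ ≥ 4 θ_c C₂ C₄`.
-/

open Real Set Filter

theorem HasDerivAt.unique_of_eqOn_Ioi {f g : ℝ → ℝ} {f' g' x : ℝ} (hf : HasDerivAt f f' x)
    (hg : HasDerivAt g g' x) (hfg : EqOn f g (Ioi 0)) (hx : 0 < x) : f' = g' :=
  hf.unique ((eventuallyEq_of_mem (Ioi_mem_nhds hx) hfg).hasDerivAt_iff.mpr hg)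

theorem hasDerivAt_sub_mul_deriv {w w' : ℝ → ℝ} {θ w'' : ℝ} (hw : HasDerivAt w (w' θ) θ)
    (hw' : HasDerivAt w' w'' θ) : HasDerivAt (fun t => w t - t * w' t) (-(θ * w'')) θ :=
  (hw.fun_sub ((hasDerivAt_id' θ).fun_mul hw')).congr_deriv (by ring)

section FreeEnergy

variable {a a' a'' : ℝ → ℝ} {c C₁ θ : ℝ}

theorem hasDerivAt_freeEnergy (ha : HasDerivAt a (a' θ) θ) (hθ : θ ≠ 0) :
    HasDerivAt (fun t => a t * c + C₁ * t * (1 - log t)) (a' θ * c - C₁ * log θ) θ :=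
  ((ha.mul_const c).fun_add (((hasDerivAt_id' θ).const_mul C₁).fun_mul
    ((hasDerivAt_const θ 1).fun_sub (hasDerivAt_log hθ)))).congr_deriv (by field_simp; ring)

theorem hasDerivAt_neg_entropy (ha' : HasDerivAt a' (a'' θ) θ) (hθ : θ ≠ 0) :
    HasDerivAt (fun t => a' t * c - C₁ * log t) (a'' θ * c - C₁ / θ) θ := by
  simpa only [div_eq_mul_inv] using (ha'.mul_const c).fun_sub ((hasDerivAt_log hθ).const_mul C₁)

theorem hasDerivAt_heatCapacity {a''' : ℝ} (ha'' : HasDerivAt a'' a''' θ) :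
    HasDerivAt (fun t => C₁ - t * a'' t * c) (-((a'' θ + θ * a''') * c)) θ :=
  ((hasDerivAt_const θ C₁).fun_sub (((hasDerivAt_id' θ).fun_mul ha'').mul_const c)).congr_deriv
    (by ring)

theorem div_max_one_sq_le_div {C θ : ℝ} (hC : 0 ≤ C) : C / max θ 1 ^ 2 ≤ C / max θ 1 := by
  have hM : 1 ≤ max θ 1 := le_max_right θ 1
  exact div_le_div_of_nonneg_left hC (by positivity) (by nlinarith)

theorem mul_div_max_one_le {C θ : ℝ} (hC : 0 ≤ C) : θ * (C / max θ 1) ≤ C := by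
  have hM : 0 < max θ 1 := lt_max_of_lt_right one_pos
  calc θ * (C / max θ 1) = C * (θ / max θ 1) := by ring
    _ ≤ C * 1 := by gcongr; exact div_le_one_of_le₀ (le_max_left θ 1) hM.le
    _ = C := mul_one C

theorem abs_add_mul_mul_le_sub_mul_mul_div {x y θ c C₁ C₂ C₄ θc : ℝ} (hθ : 0 < θ) (hθc : 0 < θc)
    (hC₂ : 0 ≤ C₂) (hc : |c| ≤ C₄) (hx : |x| ≤ C₂ / max θ 1 ^ 2) (hy : |y| ≤ C₂ / max θ 1)
    (hC₁ : (1 + 4 * θc) * C₂ * C₄ ≤ C₁) :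
    |(x + θ * y) * c| ≤ (C₁ - θ * x * c) / (2 * θc) := by
  have hx' : |x| ≤ C₂ / max θ 1 := hx.trans (div_max_one_sq_le_div hC₂)
  have hx₁ : |x| ≤ C₂ := hx'.trans (div_le_self hC₂ (le_max_right θ 1))
  have hx₂ : θ * |x| ≤ C₂ :=
    (mul_le_mul_of_nonneg_left hx' hθ.le).trans (mul_div_max_one_le hC₂)
  have hy₁ : θ * |y| ≤ C₂ :=
    (mul_le_mul_of_nonneg_left hy hθ.le).trans (mul_div_max_one_le hC₂)
  have hlhs : |(x + θ * y) * c| ≤ 2 * C₂ * C₄ :=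
    calc |(x + θ * y) * c| ≤ (|x| + θ * |y|) * |c| := by
          rw [abs_mul]
          gcongr
          simpa [abs_mul, abs_of_pos hθ] using abs_add_le x (θ * y)
      _ ≤ (2 * C₂) * C₄ := by
          gcongr
          linarith
  have hrhs : θ * x * c ≤ C₂ * C₄ :=
    calc θ * x * c ≤ |θ * x * c| := le_abs_self _
      _ = θ * |x| * |c| := by rw [abs_mul, abs_mul, abs_of_pos hθ]
      _ ≤ C₂ * C₄ := mul_le_mul hx₂ hc (abs_nonneg c) hC₂
  rw [le_div_iff₀ (by positivity)]
  nlinarith [mul_le_mul_of_nonneg_right hlhs (by positivity : (0 : ℝ) ≤ 2 * θc)]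

theorem internal_energy_vs_heat_capacity_general (C₁ C₂ C₄ θc : ℝ)
    (hC₂ : 0 ≤ C₂) (hθc : 0 < θc) (c : ℝ) (hc : |c| ≤ C₄)
    (a a' a'' a''' : ℝ → ℝ)
    (ha' : ∀ θ : ℝ, 0 < θ → HasDerivAt a (a' θ) θ)
    (ha'' : ∀ θ : ℝ, 0 < θ → HasDerivAt a' (a'' θ) θ)
    (ha''' : ∀ θ : ℝ, 0 < θ → HasDerivAt a'' (a''' θ) θ)
    (ha''bd : ∀ θ : ℝ, 0 < θ → |a'' θ| ≤ C₂ / (max θ 1) ^ 2)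
    (ha'''bd : ∀ θ : ℝ, 0 < θ → |a''' θ| ≤ C₂ / max θ 1)
    (hC₁big : (1 + 4 * θc) * C₂ * C₄ ≤ C₁)
    (w w' w'' : ℝ → ℝ) (hw : ∀ θ : ℝ, w θ = a θ * c + C₁ * θ * (1 - Real.log θ))
    (hw' : ∀ θ : ℝ, 0 < θ → HasDerivAt w (w' θ) θ)
    (hw'' : ∀ θ : ℝ, 0 < θ → HasDerivAt w' (w'' θ) θ)
    (win win' win'' : ℝ → ℝ) (hwin : ∀ θ : ℝ, win θ = w θ - θ * w' θ)
    (hwin' : ∀ θ : ℝ, 0 < θ → HasDerivAt win (win' θ) θ)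
    (hwin'' : ∀ θ : ℝ, 0 < θ → HasDerivAt win' (win'' θ) θ) :
    ∀ θ : ℝ, 0 < θ → |win'' θ| ≤ (-θ * w'' θ) / (2 * θc) := by
  have hw'_eq : EqOn w' (fun t => a' t * c - C₁ * log t) (Ioi 0) := fun t ht =>
    (hw' t ht).unique_of_eqOn_Ioi (hasDerivAt_freeEnergy (ha' t ht) (ne_of_gt ht))
      (fun s _ => hw s) ht
  have hw''_eq (t : ℝ) (ht : 0 < t) : w'' t = a'' t * c - C₁ / t :=
    (hw'' t ht).unique_of_eqOn_Ioi (hasDerivAt_neg_entropy (ha'' t ht) (ne_of_gt ht)) hw'_eq ht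
  have hcV (t : ℝ) (ht : 0 < t) : -t * w'' t = C₁ - t * a'' t * c := by
    rw [hw''_eq t ht]
    field_simp
    ring
  have hwin'_eq : EqOn win' (fun t => C₁ - t * a'' t * c) (Ioi 0) := fun t ht => by
    rw [(hwin' t ht).unique_of_eqOn_Ioi (hasDerivAt_sub_mul_deriv (hw' t ht) (hw'' t ht))
      (fun s _ => hwin s) ht, ← neg_mul, hcV t ht]
  intro θ hθ
  rw [(hwin'' θ hθ).unique_of_eqOn_Ioi (hasDerivAt_heatCapacity (ha''' θ hθ)) hwin'_eq hθ,
    abs_neg, hcV θ hθ]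
  exact abs_add_mul_mul_le_sub_mul_mul_div hθ hθc hC₂ hc (ha''bd θ hθ) (ha'''bd θ hθ) hC₁big

/-- Shape-memory-alloy condition (C.10): with `|c| ≤ C₄`, `a` three times
differentiable on `(0,∞)` with `|a''(θ)| ≤ C₂ / max(θ,1)²` and
`|a'''(θ)| ≤ C₂ / max(θ,1)`, `w(θ) = a(θ) c + C₁ θ (1 − log θ)`,
`w^{in}(θ) = w(θ) − θ w'(θ)`, and `C₁ ≥ (1 + 4θ_c) C₂ C₄`, one has
`|(w^{in})''(θ)| ≤ (−θ w''(θ)) / (2 θ_c)` for every `θ > 0`. -/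
theorem internal_energy_vs_heat_capacity (C₁ C₂ C₄ θc : ℝ) (hC₁ : 0 ≤ C₁)
    (hC₂ : 0 ≤ C₂) (hC₄ : 0 ≤ C₄) (hθc : 0 < θc) (c : ℝ) (hc : |c| ≤ C₄)
    (a a' a'' a''' : ℝ → ℝ)
    (ha' : ∀ θ : ℝ, 0 < θ → HasDerivAt a (a' θ) θ)
    (ha'' : ∀ θ : ℝ, 0 < θ → HasDerivAt a' (a'' θ) θ)
    (ha''' : ∀ θ : ℝ, 0 < θ → HasDerivAt a'' (a''' θ) θ)
    (ha''bd : ∀ θ : ℝ, 0 < θ → |a'' θ| ≤ C₂ / (max θ 1) ^ 2)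
    (ha'''bd : ∀ θ : ℝ, 0 < θ → |a''' θ| ≤ C₂ / max θ 1)
    (hC₁big : (1 + 4 * θc) * C₂ * C₄ ≤ C₁)
    (w w' w'' : ℝ → ℝ) (hw : ∀ θ : ℝ, w θ = a θ * c + C₁ * θ * (1 - Real.log θ))
    (hw' : ∀ θ : ℝ, 0 < θ → HasDerivAt w (w' θ) θ)
    (hw'' : ∀ θ : ℝ, 0 < θ → HasDerivAt w' (w'' θ) θ)
    (win win' win'' : ℝ → ℝ) (hwin : ∀ θ : ℝ, win θ = w θ - θ * w' θ)
    (hwin' : ∀ θ : ℝ, 0 < θ → HasDerivAt win (win' θ) θ)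
    (hwin'' : ∀ θ : ℝ, 0 < θ → HasDerivAt win' (win'' θ) θ) :
    ∀ θ : ℝ, 0 < θ → |win'' θ| ≤ (-θ * w'' θ) / (2 * θc) :=
  internal_energy_vs_heat_capacity_general C₁ C₂ C₄ θc hC₂ hθc c hc a a' a'' a''' ha' ha'' ha'''
    ha''bd ha'''bd hC₁big w w' w'' hw hw' hw'' win win' win'' hwin hwin' hwin''
end FreeEnergy
end
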